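/- With the James-space construction below, for every linear functional x* on J_K the L¹ norm of π*(x*) satisfies ‖π*(x*)‖_{L¹(μ)} = |x*|(d) ≤ B·‖x*‖_{J*}, where ‖x*‖_{J*} = sup{|x*(x)| : x ∈ J_K, ‖x‖_J ≤ 1}. -/

import Mathlib

open Filter MeasureTheory

/-- The set of candidate values whose supremum (times `1/√2`) defines the James norm. -/
def jamesSet (x : ℕ → ℝ) : Set ℝ :=
  {r : ℝ | ∃ (m : ℕ) (p : Fin (m + 1) → ℕ), StrictMono p ∧
    r = Real.sqrt ((∑ i : Fin m, (x (p i.castSucc) - x (p i.succ)) ^ 2)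
      + (x (p (Fin.last m)) - x (p 0)) ^ 2)}

/-- The James norm of a sequence. -/
noncomputable def jamesNorm (x : ℕ → ℝ) : ℝ :=
  (Real.sqrt 2)⁻¹ * sSup (jamesSet x)

/-- `d_n = Σ_{j≤n} e_j = (1,…,1,0,…)` with `n+1` leading ones. -/
def dSeq (n : ℕ) : ℕ → ℝ := fun j => if j ≤ n then 1 else 0

/-- `|x| = Σ_{i≤K} |γ*_i(x)|·ω_i`, the lattice absolute value induced by a basis
`ω` with coordinate functionals `γ`. -/
noncomputable def absVec (K : ℕ) (ω : Fin (K + 1) → ℕ → ℝ)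
    (γ : Fin (K + 1) → (ℕ → ℝ) →ₗ[ℝ] ℝ) (x : ℕ → ℝ) : ℕ → ℝ :=
  ∑ i, |γ i x| • ω i

/-- `d = Σ_{j≤K} 2^{−j−1}·|d_j|`. -/
noncomputable def dElt (K : ℕ) (ω : Fin (K + 1) → ℕ → ℝ)
    (γ : Fin (K + 1) → (ℕ → ℝ) →ₗ[ℝ] ℝ) : ℕ → ℝ :=
  ∑ j : Fin (K + 1), ((2 : ℝ) ^ ((j : ℕ) + 1))⁻¹ • absVec K ω γ (dSeq j)

/-- `d* = Σ_{j≤K} 2^{−j−1}·|e*_j|`, as a function on sequences; here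
`|e*_j|(x) = Σ_{i≤K} γ*_i(x)·|e*_j(ω_i)| = Σ_{i≤K} γ*_i(x)·|ω_i(j)|`. -/
noncomputable def dStar (K : ℕ) (ω : Fin (K + 1) → ℕ → ℝ)
    (γ : Fin (K + 1) → (ℕ → ℝ) →ₗ[ℝ] ℝ) (x : ℕ → ℝ) : ℝ :=
  ∑ j : Fin (K + 1), ((2 : ℝ) ^ ((j : ℕ) + 1))⁻¹ * (∑ i, γ i x * |ω i (j : ℕ)|)

/-- The probability measure on `Ω = {0,…,K}` given by
`μ({i}) = γ*_i(d)·d*(ω_i)/d*(d)`. -/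
noncomputable def jMeasure (K : ℕ) (ω : Fin (K + 1) → ℕ → ℝ)
    (γ : Fin (K + 1) → (ℕ → ℝ) →ₗ[ℝ] ℝ) : Measure (Fin (K + 1)) :=
  ∑ i : Fin (K + 1),
    (ENNReal.ofReal (γ i (dElt K ω γ) * dStar K ω γ (ω i) / dStar K ω γ (dElt K ω γ))) •
      Measure.dirac i

/-- The embedding `π : J_K → L¹(Ω,μ)`, `π(x)(i) = (d*(d)/γ*_i(d))·γ*_i(x)`. -/
noncomputable def jPi (K : ℕ) (ω : Fin (K + 1) → ℕ → ℝ)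
    (γ : Fin (K + 1) → (ℕ → ℝ) →ₗ[ℝ] ℝ) (x : ℕ → ℝ) : Fin (K + 1) → ℝ :=
  fun i => (dStar K ω γ (dElt K ω γ) / γ i (dElt K ω γ)) * γ i x

/-- The embedding `π* : J_K* → L¹(Ω,μ)`, `π*(x*)(i) = (d*(d)/d*(ω_i))·x*(ω_i)`. -/
noncomputable def jPiStar (K : ℕ) (ω : Fin (K + 1) → ℕ → ℝ)
    (γ : Fin (K + 1) → (ℕ → ℝ) →ₗ[ℝ] ℝ) (f : (ℕ → ℝ) →ₗ[ℝ] ℝ) : Fin (K + 1) → ℝ :=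
  fun i => (dStar K ω γ (dElt K ω γ) / dStar K ω γ (ω i)) * f (ω i)

/-! The weights of `μ` are chosen so that the density `d*(d)/d*(ω_i)` of `π*(x*)` cancels, which
gives `‖π*(x*)‖₁ = Σ_i γ*_i(d)·|x*(ω_i)|`; positivity of `d*(d)` follows from
`d*(d) = Σ_i γ*_i(d)·d*(ω_i)`.
For the bound, `γ*_i(d) = Σ_j 2^{-j-1}·|γ*_i(d_j)|` with `Σ_j 2^{-j-1} ≤ 1`, so it suffices to bound
`Σ_i |γ*_i(d_j)|·|x*(ω_i)|` for each `j`. Choosing signs `ε_i` this sum equals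
`x*(Σ_i ε_i γ*_i(d_j) ω_i)`, and by unconditionality that vector has James norm at most
`B·‖d_j‖_J ≤ B`, since `(d_j ∘ p)` is a decreasing `0/1` sequence for increasing `p`. -/

open Finset
open scoped Pointwise

lemma Fin.sum_castSucc_sub_succ {M : Type*} [AddCommGroup M] :
    ∀ {m : ℕ} (a : Fin (m + 1) → M),
      ∑ i : Fin m, (a i.castSucc - a i.succ) = a 0 - a (Fin.last m)
  | 0, _ => by simp
  | m + 1, a => by
    have ih := Fin.sum_castSucc_sub_succ (a ∘ Fin.castSucc)
    simp only [Function.comp_apply, Fin.castSucc_zero, ← Fin.succ_castSucc] at ih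
    rw [Fin.sum_univ_castSucc, ih, Fin.succ_last]
    abel

def jamesSum {m : ℕ} (a : Fin (m + 1) → ℝ) : ℝ :=
  (∑ i : Fin m, (a i.castSucc - a i.succ) ^ 2) + (a (Fin.last m) - a 0) ^ 2

lemma mem_jamesSet {x : ℕ → ℝ} {r : ℝ} :
    r ∈ jamesSet x ↔ ∃ (m : ℕ) (p : Fin (m + 1) → ℕ), StrictMono p ∧ r = √(jamesSum (x ∘ p)) :=
  Iff.rfl

lemma jamesSum_smul {m : ℕ} (c : ℝ) (a : Fin (m + 1) → ℝ) :
    jamesSum (c • a) = c ^ 2 * jamesSum a := by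
  simp only [jamesSum, Pi.smul_apply, smul_eq_mul, mul_add, Finset.mul_sum]
  congr 1
  · exact Finset.sum_congr rfl fun _ _ => by ring
  · ring

lemma jamesSum_le_four_mul_sum_sq {m : ℕ} (a : Fin (m + 1) → ℝ) :
    jamesSum a ≤ 4 * ∑ k, a k ^ 2 := by
  have hterm : ∀ i : Fin m,
      (a i.castSucc - a i.succ) ^ 2 ≤ 2 * a i.castSucc ^ 2 + 2 * a i.succ ^ 2 := fun i => by
    nlinarith [sq_nonneg (a i.castSucc + a i.succ)]
  have hsum := Finset.sum_le_sum fun i (_ : i ∈ univ) => hterm i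
  rw [Finset.sum_add_distrib, ← Finset.mul_sum, ← Finset.mul_sum] at hsum
  have hcast := Fin.sum_univ_castSucc fun k => a k ^ 2
  have hsucc := Fin.sum_univ_succ fun k => a k ^ 2
  unfold jamesSum
  nlinarith [sq_nonneg (a (Fin.last m) + a 0)]

lemma jamesSum_le_two_of_antitone {m : ℕ} {a : Fin (m + 1) → ℝ} (ha : Antitone a)
    (h0 : ∀ k, 0 ≤ a k) (h1 : ∀ k, a k ≤ 1) : jamesSum a ≤ 2 := by
  have hstep : ∀ i : Fin m, (a i.castSucc - a i.succ) ^ 2 ≤ a i.castSucc - a i.succ := fun i => by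
    have hle : a i.succ ≤ a i.castSucc := ha Fin.castSucc_lt_succ.le
    nlinarith [h0 i.succ, h1 i.castSucc]
  have hsum := Finset.sum_le_sum fun i (_ : i ∈ univ) => hstep i
  rw [Fin.sum_castSucc_sub_succ] at hsum
  unfold jamesSum
  nlinarith [h0 0, h1 0, h0 (Fin.last m), h1 (Fin.last m)]

lemma zero_mem_jamesSet (x : ℕ → ℝ) : (0 : ℝ) ∈ jamesSet x :=
  mem_jamesSet.2 ⟨0, fun _ => 0, Fin.strictMono_iff_lt_succ.2 fun i => i.elim0, by simp [jamesSum]⟩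

lemma jamesSet_smul (c : ℝ) (x : ℕ → ℝ) : jamesSet (c • x) = |c| • jamesSet x := by
  have hsqrt : ∀ {m : ℕ} (p : Fin (m + 1) → ℕ),
      √(jamesSum ((c • x) ∘ p)) = |c| * √(jamesSum (x ∘ p)) := fun p => by
    rw [show (c • x) ∘ p = c • (x ∘ p) from rfl, jamesSum_smul, Real.sqrt_mul (sq_nonneg c),
      Real.sqrt_sq_eq_abs]
  ext r
  simp only [mem_jamesSet, Set.mem_smul_set, smul_eq_mul]
  constructor
  · rintro ⟨m, p, hp, rfl⟩
    exact ⟨_, ⟨m, p, hp, rfl⟩, (hsqrt p).symm⟩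
  · rintro ⟨_, ⟨m, p, hp, rfl⟩, rfl⟩
    exact ⟨m, p, hp, (hsqrt p).symm⟩

lemma jamesNorm_smul (c : ℝ) (x : ℕ → ℝ) : jamesNorm (c • x) = |c| * jamesNorm x := by
  rw [jamesNorm, jamesSet_smul, Real.sSup_smul_of_nonneg (abs_nonneg c), jamesNorm, smul_eq_mul]
  ring

lemma jamesNorm_zero : jamesNorm 0 = 0 := by
  simpa using jamesNorm_smul 0 0

lemma sum_comp_le_sum_range {n K : ℕ} {g : ℕ → ℝ} (hg : ∀ q, 0 ≤ g q)
    (hsupp : ∀ q, K < q → g q = 0) {p : Fin n → ℕ} (hp : Function.Injective p) :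
    ∑ k, g (p k) ≤ ∑ q ∈ range (K + 1), g q := by
  rw [← Finset.sum_image fun x _ y _ h => hp h, ← Finset.sum_filter_ne_zero]
  refine Finset.sum_le_sum_of_subset_of_nonneg (fun q hq => ?_) fun q _ _ => hg q
  have hq0 := (Finset.mem_filter.1 hq).2
  exact Finset.mem_range.2 (Nat.lt_succ_of_le (not_lt.1 fun h => hq0 (hsupp q h)))

lemma jamesSet_bddAbove {K : ℕ} {x : ℕ → ℝ} (hx : ∀ j, K < j → x j = 0) :
    BddAbove (jamesSet x) := by
  refine ⟨√(4 * ∑ q ∈ range (K + 1), x q ^ 2), ?_⟩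
  rintro r ⟨m, p, hp, rfl⟩
  refine Real.sqrt_le_sqrt ((jamesSum_le_four_mul_sum_sq (x ∘ p)).trans ?_)
  gcongr
  exact sum_comp_le_sum_range (g := fun q => x q ^ 2) (fun q => sq_nonneg _)
    (fun q hq => by simp [hx q hq]) hp.injective

lemma abs_sub_le_jamesNorm {x : ℕ → ℝ} (hx : BddAbove (jamesSet x)) {q j : ℕ} (hqj : q < j) :
    |x q - x j| ≤ jamesNorm x := by
  have hmem : √2 * |x q - x j| ∈ jamesSet x := by
    refine mem_jamesSet.2 ⟨1, ![q, j], Fin.strictMono_iff_lt_succ.2 fun i => ?_, ?_⟩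
    · fin_cases i
      exact hqj
    · rw [jamesSum, Fin.sum_univ_one, ← Real.sqrt_sq_eq_abs, ← Real.sqrt_mul zero_le_two]
      congr 1
      simp only [Fin.castSucc_zero, Function.comp_apply, Matrix.cons_val_zero, Fin.succ_zero_eq_one,
        Matrix.cons_val_one, Matrix.cons_val_fin_one, Fin.reduceLast]
      ring
  have h2 : (0 : ℝ) < √2 := by positivity
  rw [jamesNorm, le_inv_mul_iff₀ h2]
  exact le_csSup hx hmem

lemma dSeq_antitone (n : ℕ) : Antitone (dSeq n) := by
  intro i j hij
  simp only [dSeq]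
  split_ifs <;> first | omega | norm_num

lemma dSeq_mem_Icc (n k : ℕ) : dSeq n k ∈ Set.Icc 0 1 := by
  unfold dSeq
  split_ifs <;> norm_num

lemma jamesNorm_dSeq_le (n : ℕ) : jamesNorm (dSeq n) ≤ 1 := by
  have hsup : sSup (jamesSet (dSeq n)) ≤ √2 := by
    refine csSup_le ⟨0, zero_mem_jamesSet _⟩ fun r hr => ?_
    obtain ⟨m, p, hp, rfl⟩ := mem_jamesSet.1 hr
    exact Real.sqrt_le_sqrt (jamesSum_le_two_of_antitone
      ((dSeq_antitone n).comp_monotone hp.monotone) (fun k => (dSeq_mem_Icc n (p k)).1)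
      fun k => (dSeq_mem_Icc n (p k)).2)
  have h2 : (0 : ℝ) < √2 := by positivity
  rw [jamesNorm, inv_mul_le_iff₀ h2, mul_one]
  exact hsup

lemma abs_le_jamesNorm {K : ℕ} {x : ℕ → ℝ} (hx : ∀ j, K < j → x j = 0) {q : ℕ} (hq : q ≤ K) :
    |x q| ≤ jamesNorm x := by
  simpa [hx (K + 1) K.lt_succ_self] using
    abs_sub_le_jamesNorm (jamesSet_bddAbove hx) (Nat.lt_succ_of_le hq)

lemma eq_sum_range_single {K : ℕ} {x : ℕ → ℝ} (hx : ∀ j, K < j → x j = 0) :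
    x = ∑ q ∈ range (K + 1), x q • Pi.single q (1 : ℝ) := by
  funext j
  simp only [Finset.sum_apply, Pi.smul_apply, Pi.single_apply, smul_eq_mul, mul_ite, mul_one,
    mul_zero, Finset.sum_ite_eq, Finset.mem_range]
  split_ifs with hj
  · rfl
  · exact hx j (by omega)

lemma abs_apply_le_of_abs_le_one (f : (ℕ → ℝ) →ₗ[ℝ] ℝ) {K : ℕ} {x : ℕ → ℝ}
    (hx : ∀ j, K < j → x j = 0) (hx1 : ∀ q ≤ K, |x q| ≤ 1) :
    |f x| ≤ ∑ q ∈ range (K + 1), |f (Pi.single q 1)| := by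
  rw [eq_sum_range_single hx, map_sum]
  refine (Finset.abs_sum_le_sum_abs _ _).trans (Finset.sum_le_sum fun q hq => ?_)
  rw [map_smul, smul_eq_mul, abs_mul]
  exact mul_le_of_le_one_left (abs_nonneg _) (hx1 q (Nat.lt_succ_iff.1 (Finset.mem_range.1 hq)))

/-- `‖f‖_{J*} = sSup (dualNormSet K f)`. -/
def dualNormSet (K : ℕ) (f : (ℕ → ℝ) →ₗ[ℝ] ℝ) : Set ℝ :=
  {r : ℝ | ∃ x : ℕ → ℝ, (∀ j, K < j → x j = 0) ∧ jamesNorm x ≤ 1 ∧ r = |f x|}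

lemma dualNormSet_bddAbove (K : ℕ) (f : (ℕ → ℝ) →ₗ[ℝ] ℝ) : BddAbove (dualNormSet K f) := by
  refine ⟨∑ q ∈ range (K + 1), |f (Pi.single q 1)|, ?_⟩
  rintro r ⟨x, hx, hx1, rfl⟩
  exact abs_apply_le_of_abs_le_one f hx fun q hq => (abs_le_jamesNorm hx hq).trans hx1

lemma abs_apply_le_mul_sSup_dualNormSet (f : (ℕ → ℝ) →ₗ[ℝ] ℝ) {K : ℕ} {x : ℕ → ℝ}
    (hx : ∀ j, K < j → x j = 0) {c : ℝ} (hc : 0 < c) (hxc : jamesNorm x ≤ c) :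
    |f x| ≤ c * sSup (dualNormSet K f) := by
  have hmem : |f (c⁻¹ • x)| ∈ dualNormSet K f := by
    refine ⟨c⁻¹ • x, fun j hj => by simp [hx j hj], ?_, rfl⟩
    rw [jamesNorm_smul, abs_inv, abs_of_pos hc, inv_mul_le_iff₀ hc, mul_one]
    exact hxc
  have hle := le_csSup (dualNormSet_bddAbove K f) hmem
  rw [map_smul, smul_eq_mul, abs_mul, abs_inv, abs_of_pos hc, inv_mul_le_iff₀ hc] at hle
  exact hle

lemma sSup_dualNormSet_nonneg (K : ℕ) (f : (ℕ → ℝ) →ₗ[ℝ] ℝ) : 0 ≤ sSup (dualNormSet K f) :=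
  le_csSup_of_le (dualNormSet_bddAbove K f) ⟨0, fun _ _ => rfl, by simp [jamesNorm_zero], by simp⟩
    le_rfl

lemma integral_sum_ofReal_smul_dirac {ι : Type*} [Fintype ι] [MeasurableSpace ι]
    [MeasurableSingletonClass ι] {w : ι → ℝ} (hw : ∀ i, 0 ≤ w i) (g : ι → ℝ) :
    ∫ i, g i ∂(∑ i, ENNReal.ofReal (w i) • Measure.dirac i) = ∑ i, w i * g i := by
  rw [integral_finsetSum_measure fun i _ =>
    Integrable.of_finite.smul_measure ENNReal.ofReal_ne_top]
  refine Finset.sum_congr rfl fun i _ => ?_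
  rw [integral_smul_measure, integral_dirac, ENNReal.toReal_ofReal (hw i), smul_eq_mul]

lemma sum_inv_two_pow_succ_le_one (n : ℕ) : ∑ j : Fin n, ((2 : ℝ) ^ ((j : ℕ) + 1))⁻¹ ≤ 1 := by
  rw [Fin.sum_univ_eq_sum_range (fun j => ((2 : ℝ) ^ (j + 1))⁻¹)]
  have h := sum_geometric_two_le n
  simp only [one_div, inv_pow] at h
  simp only [pow_succ, mul_inv, ← Finset.sum_mul]
  linarith

lemma sign_mul_self_eq_abs (t : ℝ) : (if 0 ≤ t then 1 else -1) * t = |t| := by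
  split_ifs with ht
  · rw [one_mul, abs_of_nonneg ht]
  · rw [neg_one_mul, abs_of_neg (not_le.1 ht)]

section Basis

variable {K : ℕ} {ω : Fin (K + 1) → ℕ → ℝ} {γ : Fin (K + 1) → (ℕ → ℝ) →ₗ[ℝ] ℝ}

lemma apply_sum_smul (hdual : ∀ i i', γ i (ω i') = if i = i' then 1 else 0)
    (c : Fin (K + 1) → ℝ) (i : Fin (K + 1)) : γ i (∑ i', c i' • ω i') = c i := by
  simp [map_sum, hdual]

lemma apply_absVec (hdual : ∀ i i', γ i (ω i') = if i = i' then 1 else 0)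
    (x : ℕ → ℝ) (i : Fin (K + 1)) : γ i (absVec K ω γ x) = |γ i x| :=
  apply_sum_smul hdual _ i

lemma apply_dElt (hdual : ∀ i i', γ i (ω i') = if i = i' then 1 else 0) (i : Fin (K + 1)) :
    γ i (dElt K ω γ) = ∑ j : Fin (K + 1), ((2 : ℝ) ^ ((j : ℕ) + 1))⁻¹ * |γ i (dSeq j)| := by
  simp [dElt, map_sum, apply_absVec hdual]

lemma dStar_eq_sum (hdual : ∀ i i', γ i (ω i') = if i = i' then 1 else 0) (x : ℕ → ℝ) :
    dStar K ω γ x = ∑ i, γ i x * dStar K ω γ (ω i) := by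
  have hω : ∀ i, dStar K ω γ (ω i) = ∑ j : Fin (K + 1), ((2 : ℝ) ^ ((j : ℕ) + 1))⁻¹ * |ω i j| :=
    fun i => by simp [dStar, hdual]
  simp only [hω]
  simp only [dStar, Finset.mul_sum]
  rw [Finset.sum_comm]
  exact Finset.sum_congr rfl fun _ _ => Finset.sum_congr rfl fun _ _ => by ring

lemma integral_abs_jPiStar (hdual : ∀ i i', γ i (ω i') = if i = i' then 1 else 0)
    (hγd : ∀ i, 0 < γ i (dElt K ω γ)) (hdω : ∀ i, 0 < dStar K ω γ (ω i))
    (f : (ℕ → ℝ) →ₗ[ℝ] ℝ) :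
    ∫ i, |jPiStar K ω γ f i| ∂(jMeasure K ω γ) = ∑ i, γ i (dElt K ω γ) * |f (ω i)| := by
  have hdd : 0 < dStar K ω γ (dElt K ω γ) := by
    rw [dStar_eq_sum hdual]
    exact Finset.sum_pos (fun i _ => mul_pos (hγd i) (hdω i)) Finset.univ_nonempty
  rw [jMeasure, integral_sum_ofReal_smul_dirac fun i =>
    (div_pos (mul_pos (hγd i) (hdω i)) hdd).le]
  refine Finset.sum_congr rfl fun i _ => ?_
  rw [jPiStar, abs_mul, abs_of_pos (div_pos hdd (hdω i))]
  field_simp [(hdω i).ne', hdd.ne']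

lemma sum_abs_mul_abs_le {B : ℝ} (hB : 0 < B) (hω_supp : ∀ i j, K < j → ω i j = 0)
    (hunc : ∀ (α ε : Fin (K + 1) → ℝ), (∀ i, ε i = 1 ∨ ε i = -1) →
      jamesNorm (∑ i, (ε i * α i) • ω i) ≤ B * jamesNorm (∑ i, α i • ω i))
    (f : (ℕ → ℝ) →ₗ[ℝ] ℝ) {α : Fin (K + 1) → ℝ} (hα : jamesNorm (∑ i, α i • ω i) ≤ 1) :
    ∑ i, |α i| * |f (ω i)| ≤ B * sSup (dualNormSet K f) := by
  set ε : Fin (K + 1) → ℝ := fun i => if 0 ≤ α i * f (ω i) then 1 else -1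
  have hε : ∀ i, ε i = 1 ∨ ε i = -1 := fun i => by
    by_cases h : 0 ≤ α i * f (ω i) <;> simp [ε, h]
  have hy_supp : ∀ j, K < j → (∑ i, (ε i * α i) • ω i) j = 0 := fun j hj => by
    simp [Finset.sum_apply, hω_supp _ j hj]
  have hfy : f (∑ i, (ε i * α i) • ω i) = ∑ i, |α i| * |f (ω i)| := by
    simp only [map_sum, map_smul, smul_eq_mul]
    refine Finset.sum_congr rfl fun i _ => ?_
    rw [← abs_mul, ← sign_mul_self_eq_abs]
    ring
  calc ∑ i, |α i| * |f (ω i)| ≤ |f (∑ i, (ε i * α i) • ω i)| := hfy ▸ le_abs_self _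
    _ ≤ B * sSup (dualNormSet K f) :=
      abs_apply_le_mul_sSup_dualNormSet f hy_supp hB
        ((hunc α ε hε).trans (mul_le_of_le_one_right hB.le hα))

lemma sum_apply_dElt_mul_abs_le {B : ℝ} (hB : 0 < B) (hω_supp : ∀ i j, K < j → ω i j = 0)
    (hbasis : ∀ x : ℕ → ℝ, (∀ j, K < j → x j = 0) → (∑ i, γ i x • ω i) = x)
    (hdual : ∀ i i', γ i (ω i') = if i = i' then 1 else 0)
    (hunc : ∀ (α ε : Fin (K + 1) → ℝ), (∀ i, ε i = 1 ∨ ε i = -1) →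
      jamesNorm (∑ i, (ε i * α i) • ω i) ≤ B * jamesNorm (∑ i, α i • ω i))
    (f : (ℕ → ℝ) →ₗ[ℝ] ℝ) :
    ∑ i, γ i (dElt K ω γ) * |f (ω i)| ≤ B * sSup (dualNormSet K f) := by
  have hterm : ∀ j : Fin (K + 1), ∑ i, |γ i (dSeq j)| * |f (ω i)| ≤ B * sSup (dualNormSet K f) :=
    fun j => sum_abs_mul_abs_le hB hω_supp hunc f <| by
      rw [hbasis _ fun k hk => by simp [dSeq, show ¬k ≤ j by omega]]
      exact jamesNorm_dSeq_le j
  have hN := mul_nonneg hB.le (sSup_dualNormSet_nonneg K f)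
  calc ∑ i, γ i (dElt K ω γ) * |f (ω i)|
      = ∑ j : Fin (K + 1), ((2 : ℝ) ^ ((j : ℕ) + 1))⁻¹ * ∑ i, |γ i (dSeq j)| * |f (ω i)| := by
        simp only [apply_dElt hdual, Finset.sum_mul, Finset.mul_sum, mul_assoc]
        exact Finset.sum_comm
    _ ≤ ∑ j : Fin (K + 1), ((2 : ℝ) ^ ((j : ℕ) + 1))⁻¹ * (B * sSup (dualNormSet K f)) :=
        Finset.sum_le_sum fun j _ => mul_le_mul_of_nonneg_left (hterm j) (by positivity)
    _ ≤ B * sSup (dualNormSet K f) := by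
        rw [← Finset.sum_mul]
        exact mul_le_of_le_one_left hN (sum_inv_two_pow_succ_le_one _)

end Basis

theorem jPiStar_L1_norm_general
    (K : ℕ) (B : ℝ) (hB : 1 ≤ B)
    (ω : Fin (K + 1) → ℕ → ℝ) (γ : Fin (K + 1) → (ℕ → ℝ) →ₗ[ℝ] ℝ)
    (hω_supp : ∀ i, ∀ j, K < j → ω i j = 0)
    (hbasis : ∀ x : ℕ → ℝ, (∀ j, K < j → x j = 0) → (∑ i, γ i x • ω i) = x)
    (hdual : ∀ i i' : Fin (K + 1), γ i (ω i') = if i = i' then 1 else 0)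
    (hunc : ∀ (α ε : Fin (K + 1) → ℝ), (∀ i, ε i = 1 ∨ ε i = -1) →
      jamesNorm (∑ i, (ε i * α i) • ω i) ≤ B * jamesNorm (∑ i, α i • ω i))
    (hγd : ∀ i, 0 < γ i (dElt K ω γ)) (hdω : ∀ i, 0 < dStar K ω γ (ω i))
    (f : (ℕ → ℝ) →ₗ[ℝ] ℝ) :
    (∫ i, |jPiStar K ω γ f i| ∂(jMeasure K ω γ)) =
      (∑ i, γ i (dElt K ω γ) * |f (ω i)|) ∧
    (∑ i, γ i (dElt K ω γ) * |f (ω i)|) ≤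
      B * sSup {r : ℝ | ∃ x : ℕ → ℝ, (∀ j, K < j → x j = 0) ∧ jamesNorm x ≤ 1 ∧ r = |f x|} :=
  ⟨integral_abs_jPiStar hdual hγd hdω f,
    sum_apply_dElt_mul_abs_le (zero_lt_one.trans_le hB) hω_supp hbasis hdual hunc f⟩

/-- `‖π*(x*)‖_{L¹(μ)} = |x*|(d) ≤ B·‖x*‖_{J*}` for every functional `x*` on `J_K`. -/
theorem jPiStar_L1_norm
    (K : ℕ) (B : ℝ) (hB : 1 ≤ B)
    (ω : Fin (K + 1) → ℕ → ℝ) (γ : Fin (K + 1) → (ℕ → ℝ) →ₗ[ℝ] ℝ)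
    (hω_supp : ∀ i, ∀ j, K < j → ω i j = 0)
    (hγ_supp : ∀ i, ∀ x : ℕ → ℝ, (∀ j, j ≤ K → x j = 0) → γ i x = 0)
    (hbasis : ∀ x : ℕ → ℝ, (∀ j, K < j → x j = 0) → (∑ i, γ i x • ω i) = x)
    (hdual : ∀ i i' : Fin (K + 1), γ i (ω i') = if i = i' then 1 else 0)
    (hunc : ∀ (α ε : Fin (K + 1) → ℝ), (∀ i, ε i = 1 ∨ ε i = -1) →
      jamesNorm (∑ i, (ε i * α i) • ω i) ≤ B * jamesNorm (∑ i, α i • ω i))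
    (hγd : ∀ i, 0 < γ i (dElt K ω γ)) (hdω : ∀ i, 0 < dStar K ω γ (ω i))
    (f : (ℕ → ℝ) →ₗ[ℝ] ℝ) :
    (∫ i, |jPiStar K ω γ f i| ∂(jMeasure K ω γ)) =
      (∑ i, γ i (dElt K ω γ) * |f (ω i)|) ∧
    (∑ i, γ i (dElt K ω γ) * |f (ω i)|) ≤
      B * sSup {r : ℝ | ∃ x : ℕ → ℝ, (∀ j, K < j → x j = 0) ∧ jamesNorm x ≤ 1 ∧ r = |f x|} :=
  jPiStar_L1_norm_general K B hB ω γ hω_supp hbasis hdual hunc hγd hdω f
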